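/- Let A = ℂ[a, b, x, y, z] and let ξ be the ℂ-derivation of A defined by ξ(a) = 0, ξ(b) = 0, ξ(x) = a², ξ(y) = ax + b, ξ(z) = y. Set I₁ = a, I₂ = b, I₃ = ax² + 2bx − 2a²y, I₄ = 2ax³ + 3bx² − 6a²xy + 6a⁴z, and I₅ = 3ax⁴ + 4bx³ − 12a²x²y + 12a³y² − 24a³bz. Then: (a) ξ(I₅) = 0; (b) the syzygy I₁·I₅ + 4·I₂·I₄ − 3·I₃² = 0 holds in A; and (c) I₅ does NOT belong to the ℂ-subalgebra of A generated by I₁, I₂, I₃, I₄. Hence the algebra of polynomial absolute invariants of ξ is not generated by I₁, I₂, I₃, I₄. -/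

import Mathlib

open MvPolynomial

/-- The polynomial ring `A = ℂ[a, b, x, y, z]`, with variable indices
`0 ↦ a`, `1 ↦ b`, `2 ↦ x`, `3 ↦ y`, `4 ↦ z`. -/
abbrev A5 : Type := MvPolynomial (Fin 5) ℂ

/-- `I₁ = a`. -/
noncomputable def I1 : A5 := X 0
/-- `I₂ = b`. -/
noncomputable def I2 : A5 := X 1
/-- `I₃ = ax² + 2bx − 2a²y`. -/
noncomputable def I3 : A5 := X 0 * X 2 ^ 2 + 2 * X 1 * X 2 - 2 * X 0 ^ 2 * X 3
/-- `I₄ = 2ax³ + 3bx² − 6a²xy + 6a⁴z`. -/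
noncomputable def I4 : A5 :=
  2 * X 0 * X 2 ^ 3 + 3 * X 1 * X 2 ^ 2 - 6 * X 0 ^ 2 * X 2 * X 3 + 6 * X 0 ^ 4 * X 4
/-- `I₅ = 3ax⁴ + 4bx³ − 12a²x²y + 12a³y² − 24a³bz`. -/
noncomputable def I5 : A5 :=
  3 * X 0 * X 2 ^ 4 + 4 * X 1 * X 2 ^ 3 - 12 * X 0 ^ 2 * X 2 ^ 2 * X 3
    + 12 * X 0 ^ 3 * X 3 ^ 2 - 24 * X 0 ^ 3 * X 1 * X 4

/-!
Parts (a) and (b) are direct computations. For (c), the substitution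
`a ↦ 0, b ↦ T², x ↦ T⁻¹, y ↦ 0, z ↦ 0` into the Laurent polynomials `ℂ[T, T⁻¹]`
sends `I₁, I₂, I₃, I₄` to `0, T², 2T, 3`, which lie in the subalgebra `ℂ[T]`,
whereas it sends `I₅` to `4T⁻¹`, which does not.
-/

theorem Derivation.map_ofNat {R A M : Type*} [CommSemiring R] [CommSemiring A]
    [AddCommMonoid M] [Algebra R A] [Module A M] [Module R M] (D : Derivation R A M) (n : ℕ)
    [n.AtLeastTwo] : D (ofNat(n) : A) = 0 :=
  D.map_natCast n

namespace LaurentPolynomial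

open Polynomial

theorem eq_zero_of_C_mul_T_mem_range_toLaurentAlg {R : Type*} [CommSemiring R] {r : R} {n : ℤ}
    (hn : n < 0) (h : C r * T n ∈ (toLaurentAlg : R[X] →ₐ[R] R[T;T⁻¹]).range) : r = 0 := by
  obtain ⟨p, hp⟩ := (AlgHom.mem_range _).mp h
  rw [toLaurentAlg_apply] at hp
  have hp0 : p = 0 := by rw [← trunc_toLaurent p, hp, trunc_C_mul_T, if_neg hn.not_ge]
  rwa [hp0, map_zero, ← single_eq_C_mul_T, eq_comm, AddMonoidAlgebra.single_eq_zero] at hp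

end LaurentPolynomial

theorem derivation_I5_eq_zero (ξ : Derivation ℂ A5 A5)
    (ha : ξ (X 0) = 0) (hb : ξ (X 1) = 0) (hx : ξ (X 2) = X 0 ^ 2)
    (hy : ξ (X 3) = X 0 * X 2 + X 1) (hz : ξ (X 4) = X 3) : ξ I5 = 0 := by
  simp [I5, Derivation.leibniz, Derivation.leibniz_pow, Derivation.map_ofNat, ha, hb, hx, hy, hz]
  ring

theorem I1_mul_I5_add_four_mul_I2_mul_I4_sub_three_mul_I3_sq :
    I1 * I5 + 4 * I2 * I4 - 3 * I3 ^ 2 = 0 := by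
  simp only [I1, I2, I3, I4, I5]
  ring

section Specialization

open LaurentPolynomial Polynomial

noncomputable def laurentSpecialization : A5 →ₐ[ℂ] ℂ[T;T⁻¹] :=
  aeval ![0, T 2, T (-1), 0, 0]

theorem laurentSpecialization_I5 : laurentSpecialization I5 = LaurentPolynomial.C 4 * T (-1) := by
  simp [laurentSpecialization, I5, map_ofNat]

theorem map_adjoin_I1_I2_I3_I4_le_range :
    (Algebra.adjoin ℂ ({I1, I2, I3, I4} : Set A5)).map laurentSpecialization ≤
      (toLaurentAlg : ℂ[X] →ₐ[ℂ] ℂ[T;T⁻¹]).range := by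
  rw [AlgHom.map_adjoin, Algebra.adjoin_le_iff]
  rintro _ ⟨p, hp, rfl⟩
  rcases hp with rfl | rfl | rfl | rfl
  · exact ⟨0, by simp [laurentSpecialization, I1]⟩
  · exact ⟨Polynomial.X ^ 2, by simp [laurentSpecialization, I2]⟩
  · exact ⟨2 * Polynomial.X, by simp [laurentSpecialization, I3, map_ofNat]⟩
  · exact ⟨3, by simp [laurentSpecialization, I4, T_pow, map_ofNat]⟩

end Specialization

theorem I5_not_mem_adjoin_I1_I2_I3_I4 : I5 ∉ Algebra.adjoin ℂ ({I1, I2, I3, I4} : Set A5) := by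
  intro h
  have hrange := map_adjoin_I1_I2_I3_I4_le_range (Subalgebra.mem_map.mpr ⟨I5, h, rfl⟩)
  rw [laurentSpecialization_I5] at hrange
  have h4 : (4 : ℂ) = 0 :=
    LaurentPolynomial.eq_zero_of_C_mul_T_mem_range_toLaurentAlg (by norm_num) hrange
  norm_num at h4

/-- Let `ξ` be the ℂ-derivation of `A = ℂ[a, b, x, y, z]` with
`ξ(a) = 0`, `ξ(b) = 0`, `ξ(x) = a²`, `ξ(y) = ax + b`, `ξ(z) = y`.  Then (a) `ξ(I₅) = 0`;
(b) `I₁·I₅ + 4·I₂·I₄ − 3·I₃² = 0`; (c) `I₅` does not belong to the ℂ-subalgebra generated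
by `I₁, I₂, I₃, I₄`.  Hence the algebra of polynomial absolute invariants of `ξ` is not
generated by `I₁, I₂, I₃, I₄`. -/
theorem I5_is_invariant_but_not_generated
    (ξ : Derivation ℂ A5 A5)
    (ha : ξ (X 0) = 0) (hb : ξ (X 1) = 0) (hx : ξ (X 2) = X 0 ^ 2)
    (hy : ξ (X 3) = X 0 * X 2 + X 1) (hz : ξ (X 4) = X 3) :
    ξ I5 = 0 ∧
    I1 * I5 + 4 * I2 * I4 - 3 * I3 ^ 2 = 0 ∧
    I5 ∉ Algebra.adjoin ℂ ({I1, I2, I3, I4} : Set A5) :=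
  ⟨derivation_I5_eq_zero ξ ha hb hx hy hz,
    I1_mul_I5_add_four_mul_I2_mul_I4_sub_three_mul_I3_sq, I5_not_mem_adjoin_I1_I2_I3_I4⟩
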